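/- arXiv:2112.06860 — 4 statements merged into one kernel-verified Lean document; each statement's English description precedes it below -/
import Mathlib

section
/- Let κ and λ be nonzero integers of opposite sign and set N := min(|κ|, |λ|). Then for every w ∈ ℂ such that w + |κ+λ|/2 + m ≠ 0 for every integer m with 0 ≤ m < N, one has ζ_ℂ(w + (|κ|+|λ|)/2) = (2π)^{−N} · (∏_{m=0}^{N−1} (w + |κ+λ|/2 + m)) · ζ_ℂ(w + |κ+λ|/2). (This is the identity proved in the paper's Proposition on naïve Rankin–Selberg L-functions, in the case F = ℂ with π = e^{iκ·arg}|·|_ℂ^t, σ = e^{iλ·arg}|·|_ℂ^u, sgn(κ) ≠ sgn(λ), and w = s + t + u; it expresses L(s, π_ur × σ_ur) as an explicit polynomial multiple of L(s, π × σ).) -/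
open MeasureTheory

/-- The real zeta factor `ζ_ℝ(s) = π^{-s/2} Γ(s/2)`. -/
noncomputable def zetaR (s : ℂ) : ℂ :=
  (Real.pi : ℂ) ^ (-s / 2) * Complex.Gamma (s / 2)

/-- The complex zeta factor `ζ_ℂ(s) = 2 (2π)^{-s} Γ(s)`. -/
noncomputable def zetaC (s : ℂ) : ℂ :=
  2 * (2 * (Real.pi : ℂ)) ^ (-s) * Complex.Gamma s

/-- The multiplicative Haar measure `d×x = dx/|x|` on `ℝˣ = ℝ ∖ {0}`. -/
noncomputable def mulHaarR : Measure ℝ :=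
  volume.withDensity fun x => ENNReal.ofReal (1 / |x|)

/-- The multiplicative Haar measure `d×z = (2/π) dA(z)/|z|²` on `ℂˣ`. -/
noncomputable def mulHaarC : Measure ℂ :=
  volume.withDensity fun z => ENNReal.ofReal (2 / (Real.pi * ‖z‖ ^ 2))

/-- The complex power `|x|^w = exp(w log |x|)` for `x ∈ ℝ`. -/
noncomputable def cpowR (x : ℝ) (w : ℂ) : ℂ :=
  Complex.exp (w * (Real.log |x| : ℂ))

/-- The complex power `|z|_ℂ^w = exp(w log |z|²)` for `z ∈ ℂ`. -/
noncomputable def cpowC (z : ℂ) (w : ℂ) : ℂ :=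
  Complex.exp (w * (Real.log (‖z‖ ^ 2) : ℂ))

/-!
Since `κ` and `λ` have opposite signs, `|κ| + |λ| = |κ + λ| + 2N`, so the left-hand side is
`ζ_ℂ(s + N)` with `s = w + |κ+λ|/2`. Iterating `Γ(z + 1) = z Γ(z)` `N` times gives
`Γ(s + N) = s (s + 1) ⋯ (s + N - 1) Γ(s)`, and the exponential factor contributes `(2π)^{-N}`.
-/

/-- `Complex.Gamma_add_nat_div_Gamma_eq` would require `s` to avoid every pole of `Γ`,
not just the first `N`. -/
lemma Complex.Gamma_add_nat_eq_prod_mul (s : ℂ) (N : ℕ) (hs : ∀ m : ℕ, m < N → s + m ≠ 0) :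
    Complex.Gamma (s + N) = (∏ m ∈ Finset.range N, (s + m)) * Complex.Gamma s := by
  induction N with
  | zero => simp
  | succ n ih =>
    rw [Nat.cast_succ, ← add_assoc, Complex.Gamma_add_one _ (hs n n.lt_succ_self),
      ih fun m hm => hs m (hm.trans n.lt_succ_self), Finset.prod_range_succ]
    ring

lemma zetaC_add_nat (s : ℂ) (N : ℕ) (hs : ∀ m : ℕ, m < N → s + m ≠ 0) :
    zetaC (s + N) =
      (2 * (Real.pi : ℂ)) ^ (-(N : ℤ)) * (∏ m ∈ Finset.range N, (s + m)) * zetaC s := by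
  have h2π : (2 * (Real.pi : ℂ)) ≠ 0 := by simp [Real.pi_ne_zero]
  have hexp : (2 * (Real.pi : ℂ)) ^ (-(s + N)) =
      (2 * (Real.pi : ℂ)) ^ (-(N : ℤ)) * (2 * (Real.pi : ℂ)) ^ (-s) := by
    rw [← Complex.cpow_intCast, ← Complex.cpow_add _ _ h2π]
    push_cast
    ring_nf
  rw [zetaC, zetaC, hexp, Complex.Gamma_add_nat_eq_prod_mul s N hs]
  ring

lemma Int.natAbs_add_natAbs_of_mul_neg {a b : ℤ} (hab : a * b < 0) :
    a.natAbs + b.natAbs = (a + b).natAbs + 2 * min a.natAbs b.natAbs := by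
  rcases mul_neg_iff.mp hab with ⟨ha, hb⟩ | ⟨ha, hb⟩ <;> omega

theorem stmt_2_general (κ l : ℤ) (hsign : κ * l < 0) (w : ℂ)
    (hw : ∀ m : ℕ, m < min κ.natAbs l.natAbs →
      w + ((|κ + l| : ℤ) : ℂ) / 2 + (m : ℂ) ≠ 0) :
    zetaC (w + ((κ.natAbs : ℂ) + (l.natAbs : ℂ)) / 2) =
      (2 * (Real.pi : ℂ)) ^ (-(min κ.natAbs l.natAbs : ℤ)) *
        (∏ m ∈ Finset.range (min κ.natAbs l.natAbs),
          (w + ((|κ + l| : ℤ) : ℂ) / 2 + (m : ℂ))) *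
        zetaC (w + ((|κ + l| : ℤ) : ℂ) / 2) := by
  have hsum : ((κ.natAbs : ℂ) + (l.natAbs : ℂ)) =
      ((|κ + l| : ℤ) : ℂ) + 2 * (min κ.natAbs l.natAbs : ℕ) := by
    rw [← Int.natCast_natAbs, Int.cast_natCast]
    exact_mod_cast Int.natAbs_add_natAbs_of_mul_neg hsign
  have harg : w + ((κ.natAbs : ℂ) + (l.natAbs : ℂ)) / 2 =
      (w + ((|κ + l| : ℤ) : ℂ) / 2) + (min κ.natAbs l.natAbs : ℕ) := by
    rw [hsum]; ring
  rw [harg, zetaC_add_nat _ _ hw, Nat.cast_min]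

/-- For nonzero integers `κ, λ` of opposite sign and `N = min(|κ|, |λ|)`, if
`w + |κ+λ|/2 + m ≠ 0` for all `0 ≤ m < N`, then
`ζ_ℂ(w + (|κ|+|λ|)/2) = (2π)^{-N} ∏_{m=0}^{N-1} (w + |κ+λ|/2 + m) · ζ_ℂ(w + |κ+λ|/2)`. -/
theorem stmt_2 (κ l : ℤ) (hκ : κ ≠ 0) (hl : l ≠ 0) (hsign : κ * l < 0) (w : ℂ)
    (hw : ∀ m : ℕ, m < min κ.natAbs l.natAbs →
      w + ((|κ + l| : ℤ) : ℂ) / 2 + (m : ℂ) ≠ 0) :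
    zetaC (w + ((κ.natAbs : ℂ) + (l.natAbs : ℂ)) / 2) =
      (2 * (Real.pi : ℂ)) ^ (-(min κ.natAbs l.natAbs : ℤ)) *
        (∏ m ∈ Finset.range (min κ.natAbs l.natAbs),
          (w + ((|κ + l| : ℤ) : ℂ) / 2 + (m : ℂ))) *
        zetaC (w + ((|κ + l| : ℤ) : ℂ) / 2) :=
  stmt_2_general κ l hsign w hw
end

section
/- Let κ, λ ≥ 1 be integers, set μ := min(κ, λ) and ν := |κ−λ|/2 (a rational number, possibly a half-integer), and note (κ+λ)/2 = ν + μ. Then for every w ∈ ℂ such that (w + ν)/2 + m ≠ 0 for every integer m with 0 ≤ m < ⌈μ/2⌉ and (w + ν + 1)/2 + m ≠ 0 for every integer m with 0 ≤ m < ⌊μ/2⌋, one has ζ_ℝ(w + (κ+λ)/2) · ζ_ℝ(w + (κ+λ)/2 + 1) = π^{−μ} · (∏_{m=0}^{⌈μ/2⌉−1} ((w + ν)/2 + m)) · (∏_{m=0}^{⌊μ/2⌋−1} ((w + ν + 1)/2 + m)) · ζ_ℝ(w + ν) · ζ_ℝ(w + ν + 1). (This is the identity proved in the paper's Proposition on naïve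 Rankin–Selberg L-functions in the case F = ℝ, π = D_κ ⊗ |det|^t, σ = D_λ ⊗ |det|^u, with w = s + t + u.) -/
open MeasureTheory

/-! Since `(κ + λ)/2 = ν + μ`, the left side is `ζ_ℝ(s + μ) ζ_ℝ(s + μ + 1)` with `s = w + ν`.
By `Γ(z + 1) = z Γ(z)`, `ζ_ℝ(s + 2) = π⁻¹ (s/2) ζ_ℝ(s)`; the shift by `μ` splits into `⌈μ/2⌉` such
steps starting from `s` and `⌊μ/2⌋` starting from `s + 1`, according to the parity of `μ`. -/

theorem zetaR_add_two {s : ℂ} (hs : s / 2 ≠ 0) :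
    zetaR (s + 2) = (Real.pi : ℂ) ^ (-1 : ℤ) * (s / 2) * zetaR s := by
  have hpi : (Real.pi : ℂ) ≠ 0 := by exact_mod_cast Real.pi_ne_zero
  unfold zetaR
  rw [show (s + 2) / 2 = s / 2 + 1 by ring, Complex.Gamma_add_one _ hs,
    show -(s + 2) / 2 = -1 + -s / 2 by ring, Complex.cpow_add _ _ hpi, Complex.cpow_neg_one,
    zpow_neg_one]
  ring

theorem zetaR_add_two_mul_nat {s : ℂ} {n : ℕ} (hs : ∀ m < n, s / 2 + (m : ℂ) ≠ 0) :
    zetaR (s + 2 * n) =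
      (Real.pi : ℂ) ^ (-(n : ℤ)) * (∏ m ∈ Finset.range n, (s / 2 + (m : ℂ))) * zetaR s := by
  have hpi : (Real.pi : ℂ) ≠ 0 := by exact_mod_cast Real.pi_ne_zero
  induction n with
  | zero => simp
  | succ n ih =>
    have hstep : (s + 2 * n) / 2 ≠ 0 := by
      rw [show (s + 2 * n) / 2 = s / 2 + n by ring]
      exact hs n n.lt_succ_self
    rw [show s + 2 * ((n + 1 : ℕ) : ℂ) = s + 2 * n + 2 by push_cast; ring, zetaR_add_two hstep,
      ih fun m hm => hs m (hm.trans n.lt_succ_self), Finset.prod_range_succ,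
      show (-((n + 1 : ℕ) : ℤ)) = -1 + -(n : ℤ) by push_cast; ring, zpow_add₀ hpi]
    ring

theorem zetaR_add_nat_mul_zetaR_add_nat_add_one {s : ℂ} {μ : ℕ}
    (hs : ∀ m < (μ + 1) / 2, s / 2 + (m : ℂ) ≠ 0)
    (hs' : ∀ m < μ / 2, (s + 1) / 2 + (m : ℂ) ≠ 0) :
    zetaR (s + μ) * zetaR (s + μ + 1) =
      (Real.pi : ℂ) ^ (-(μ : ℤ)) *
        (∏ m ∈ Finset.range ((μ + 1) / 2), (s / 2 + (m : ℂ))) *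
        (∏ m ∈ Finset.range (μ / 2), ((s + 1) / 2 + (m : ℂ))) *
        zetaR s * zetaR (s + 1) := by
  have hpi : (Real.pi : ℂ) ≠ 0 := by exact_mod_cast Real.pi_ne_zero
  obtain ⟨k, rfl | rfl⟩ := Nat.even_or_odd' μ
  · have hceil : (2 * k + 1) / 2 = k := by omega
    have hfloor : 2 * k / 2 = k := by omega
    rw [hceil] at hs ⊢
    rw [hfloor] at hs' ⊢
    rw [show s + ((2 * k : ℕ) : ℂ) + 1 = s + 1 + 2 * k by push_cast; ring, Nat.cast_mul,
      Nat.cast_ofNat, zetaR_add_two_mul_nat hs, zetaR_add_two_mul_nat hs',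
      show (-((2 * k : ℕ) : ℤ)) = -(k : ℤ) + -(k : ℤ) by push_cast; ring, zpow_add₀ hpi]
    ring
  · have hceil : (2 * k + 1 + 1) / 2 = k + 1 := by omega
    have hfloor : (2 * k + 1) / 2 = k := by omega
    rw [hceil] at hs ⊢
    rw [hfloor] at hs' ⊢
    rw [show s + ((2 * k + 1 : ℕ) : ℂ) = s + 1 + 2 * k by push_cast; ring,
      show s + 1 + 2 * (k : ℂ) + 1 = s + 2 * ((k + 1 : ℕ) : ℂ) by push_cast; ring,
      zetaR_add_two_mul_nat hs, zetaR_add_two_mul_nat hs',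
      show (-((2 * k + 1 : ℕ) : ℤ)) = -((k + 1 : ℕ) : ℤ) + -(k : ℤ) by push_cast; ring,
      zpow_add₀ hpi]
    ring

theorem abs_sub_add_two_nsmul_min {α : Type*} [AddCommGroup α] [LinearOrder α]
    [IsOrderedAddMonoid α] (a b : α) : |a - b| + 2 • min a b = a + b := by
  rw [← max_sub_min_eq_abs', two_nsmul, ← add_assoc, sub_add_cancel, max_add_min]

theorem stmt_4_general (κ l : ℕ) (w : ℂ)
    (μ : ℕ) (hμ : μ = min κ l)
    (ν : ℂ) (hν : ν = ((|(κ : ℤ) - (l : ℤ)| : ℤ) : ℂ) / 2)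
    (hw1 : ∀ m : ℕ, m < (μ + 1) / 2 → (w + ν) / 2 + (m : ℂ) ≠ 0)
    (hw2 : ∀ m : ℕ, m < μ / 2 → (w + ν + 1) / 2 + (m : ℂ) ≠ 0) :
    zetaR (w + ((κ : ℂ) + (l : ℂ)) / 2) * zetaR (w + ((κ : ℂ) + (l : ℂ)) / 2 + 1) =
      (Real.pi : ℂ) ^ (-(μ : ℤ)) *
        (∏ m ∈ Finset.range ((μ + 1) / 2), ((w + ν) / 2 + (m : ℂ))) *
        (∏ m ∈ Finset.range (μ / 2), ((w + ν + 1) / 2 + (m : ℂ))) *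
        zetaR (w + ν) * zetaR (w + ν + 1) := by
  have hweight : ((κ : ℂ) + l) / 2 = ν + μ := by
    have h : |(κ : ℤ) - l| + 2 • ((min κ l : ℕ) : ℤ) = κ + l := by
      rw [Nat.cast_min]
      exact abs_sub_add_two_nsmul_min _ _
    have h' := congrArg (Int.cast : ℤ → ℂ) h
    simp only [Int.cast_add, nsmul_eq_mul, Int.cast_mul, Int.cast_natCast] at h'
    rw [hν, hμ]
    linear_combination -h' / 2
  rw [hweight, ← add_assoc]
  exact zetaR_add_nat_mul_zetaR_add_nat_add_one hw1 hw2

/-- For integers `κ, λ ≥ 1`, with `μ = min(κ, λ)` and `ν = |κ-λ|/2`, assuming the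
non-vanishing hypotheses, one has
`ζ_ℝ(w + (κ+λ)/2) ζ_ℝ(w + (κ+λ)/2 + 1) = π^{-μ} ∏_{m=0}^{⌈μ/2⌉-1} ((w+ν)/2 + m)
  ∏_{m=0}^{⌊μ/2⌋-1} ((w+ν+1)/2 + m) ζ_ℝ(w + ν) ζ_ℝ(w + ν + 1)`. -/
theorem stmt_4 (κ l : ℕ) (hκ : 1 ≤ κ) (hl : 1 ≤ l) (w : ℂ)
    (μ : ℕ) (hμ : μ = min κ l)
    (ν : ℂ) (hν : ν = ((|(κ : ℤ) - (l : ℤ)| : ℤ) : ℂ) / 2)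
    (hw1 : ∀ m : ℕ, m < (μ + 1) / 2 → (w + ν) / 2 + (m : ℂ) ≠ 0)
    (hw2 : ∀ m : ℕ, m < μ / 2 → (w + ν + 1) / 2 + (m : ℂ) ≠ 0) :
    zetaR (w + ((κ : ℂ) + (l : ℂ)) / 2) * zetaR (w + ((κ : ℂ) + (l : ℂ)) / 2 + 1) =
      (Real.pi : ℂ) ^ (-(μ : ℤ)) *
        (∏ m ∈ Finset.range ((μ + 1) / 2), ((w + ν) / 2 + (m : ℂ))) *
        (∏ m ∈ Finset.range (μ / 2), ((w + ν + 1) / 2 + (m : ℂ))) *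
        zetaR (w + ν) * zetaR (w + ν + 1) :=
  stmt_4_general κ l w μ hμ ν hν hw1 hw2
end

section
/- Let t₁, t₂, s ∈ ℂ with Re(s + 2t₁) > 0, Re(s + 2t₂) > 0, and Re(s + t₁ + t₂) > 0. Then the triple integral 2·∫_{ℝˣ}∫_{ℝˣ}∫_{ℝˣ} |a₁|^{s+2t₁} · |a₂|^{s+2t₁} · |c|^{2(t₂−t₁)} · exp(−π a₂² − 2π c²/a₂² − 2π a₁²/c²) d×c d×a₁ d×a₂ converges absolutely and equals ζ_ℝ(s + 2t₁) · ζ_ℝ(s + 2t₂) · ζ_ℂ(s + t₁ + t₂). (This is the case n = 2 of the paper's theorem that the Flicker integral of the spherical Whittaker function of GL_n(ℂ) equals the Asai L-function L(s, π, As), made fully explicit for π = |·|_ℂ^{t₁} ⊞ |·|_ℂ^{t₂} via the paper's propagation formula.) -/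
open MeasureTheory

/-- The integrand of the `n = 2` complex Flicker integral, in the variables
`p = (a₁, a₂, c)`:
`|a₁|^{s+2t₁} |a₂|^{s+2t₁} |c|^{2(t₂-t₁)} exp(-π a₂² - 2π c²/a₂² - 2π a₁²/c²)`. -/
noncomputable def flickerIntegrand2 (s t₁ t₂ : ℂ) (p : ℝ × ℝ × ℝ) : ℂ :=
  cpowR p.1 (s + 2 * t₁) * cpowR p.2.1 (s + 2 * t₁) * cpowR p.2.2 (2 * (t₂ - t₁)) *
    (Real.exp (-Real.pi * p.2.1 ^ 2 - 2 * Real.pi * (p.2.2 ^ 2 / p.2.1 ^ 2)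
      - 2 * Real.pi * (p.1 ^ 2 / p.2.2 ^ 2)) : ℂ)

/-!
In the coordinates `(a₁, a₂, c) = (x z y, y, z y)` the integrand separates into
`|x|^{s+2t₁} e^{-2πx²} · |y|^{2(s+t₁+t₂)} e^{-πy²} · |z|^{s+2t₂} e^{-2πz²}`, and this change of
variables preserves `d×a₁ d×a₂ d×c`, being a composition of two shears by multiplicative
translations. Each factor is an even function, so its integral against `d×x` is twice a Mellin
transform of a Gaussian, `b^{-w/2} Γ(w/2)`. With `b = 2π, π, 2π` the powers of `2` combine via
`ζ_ℂ(z) = 2 · 2^{-z} ζ_ℝ(2z)`.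
-/

open Set Complex
open scoped ENNReal

lemma MeasurableEquiv.map_withDensity_comp {α β : Type*} [MeasurableSpace α] [MeasurableSpace β]
    (e : α ≃ᵐ β) (μ : Measure α) (f : β → ℝ≥0∞) :
    (μ.withDensity (f ∘ e)).map e = (μ.map e).withDensity f := by
  ext s hs
  rw [Measure.map_apply e.measurable hs, withDensity_apply _ (e.measurable hs),
    withDensity_apply _ hs, Measure.restrict_map e.measurable hs, lintegral_map_equiv]
  rfl

instance : SigmaFinite mulHaarR := by
  unfold mulHaarR; infer_instance

lemma mulHaarR_singleton_zero : mulHaarR {0} = 0 :=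
  withDensity_absolutelyContinuous volume _ (measure_singleton 0)

lemma ae_ne_zero_mulHaarR : ∀ᵐ x ∂mulHaarR, x ≠ 0 :=
  measure_eq_zero_iff_ae_notMem.mp mulHaarR_singleton_zero

lemma map_mul_right_mulHaarR {c : ℝ} (hc : c ≠ 0) :
    mulHaarR.map (· * c) = mulHaarR := by
  let e : ℝ ≃ᵐ ℝ := (Homeomorph.mulRight₀ c hc).toMeasurableEquiv
  have he : ⇑e = (· * c) := rfl
  have hdens : (fun x : ℝ => ENNReal.ofReal (1 / |x|)) =
      (ENNReal.ofReal |c| • fun y : ℝ => ENNReal.ofReal (1 / |y|)) ∘ (· * c) := by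
    funext x
    simp only [Function.comp_apply, Pi.smul_apply, smul_eq_mul]
    rw [← ENNReal.ofReal_mul (abs_nonneg c), abs_mul]
    rcases eq_or_ne x 0 with rfl | hx
    · simp
    · field_simp
  conv_lhs => rw [mulHaarR, hdens]
  rw [← he, e.map_withDensity_comp, he, Real.map_volume_mul_right hc,
    withDensity_smul _ (by fun_prop), withDensity_smul_measure, smul_smul,
    ← ENNReal.ofReal_mul (abs_nonneg _), abs_inv, mul_inv_cancel₀ (abs_ne_zero.mpr hc),
    ENNReal.ofReal_one, one_smul, mulHaarR]

instance : mulHaarR.IsNegInvariant := by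
  constructor
  simpa [Measure.neg] using map_mul_right_mulHaarR (c := -1) (by norm_num)

section Even

variable {E : Type*} [NormedAddCommGroup E] {μ : Measure ℝ} {g : ℝ → E}

lemma ae_eq_indicator_Ioi_add_indicator_Ioi_neg (h0 : μ {0} = 0) (hg : ∀ x, g (-x) = g x) :
    g =ᵐ[μ] fun x => (Ioi 0).indicator g x + (Ioi 0).indicator g (-x) := by
  filter_upwards [measure_eq_zero_iff_ae_notMem.mp h0] with x hx
  rcases lt_trichotomy x 0 with h | h | h
  · simp [h, h.not_gt, hg]
  · exact absurd h hx
  · simp [h, h.not_gt]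

lemma integrable_of_even_of_integrableOn_Ioi [μ.IsNegInvariant] (h0 : μ {0} = 0)
    (hg : ∀ x, g (-x) = g x) (hint : IntegrableOn g (Ioi 0) μ) : Integrable g μ := by
  have hind : Integrable ((Ioi 0).indicator g) μ :=
    (integrable_indicator_iff measurableSet_Ioi).2 hint
  exact (hind.add hind.comp_neg).congr (ae_eq_indicator_Ioi_add_indicator_Ioi_neg h0 hg).symm

lemma integral_eq_two_smul_setIntegral_Ioi_of_even [NormedSpace ℝ E] [μ.IsNegInvariant]
    (h0 : μ {0} = 0) (hg : ∀ x, g (-x) = g x) (hint : IntegrableOn g (Ioi 0) μ) :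
    ∫ x, g x ∂μ = (2 : ℝ) • ∫ x in Ioi 0, g x ∂μ := by
  have hind : Integrable ((Ioi 0).indicator g) μ :=
    (integrable_indicator_iff measurableSet_Ioi).2 hint
  rw [integral_congr_ae (ae_eq_indicator_Ioi_add_indicator_Ioi_neg h0 hg),
    integral_add hind hind.comp_neg, integral_neg_eq_self, integral_indicator measurableSet_Ioi,
    two_smul]

end Even

lemma cpowR_of_pos {x : ℝ} (hx : 0 < x) (w : ℂ) : cpowR x w = (x : ℂ) ^ w := by
  rw [cpowR, abs_of_pos hx, cpow_def_of_ne_zero (ofReal_ne_zero.mpr hx.ne'),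
    ofReal_log hx.le, mul_comm]

lemma integrableOn_Ioi_mulHaarR_iff (g : ℝ → ℂ) :
    IntegrableOn g (Ioi 0) mulHaarR ↔ IntegrableOn (fun x => x⁻¹ • g x) (Ioi 0) := by
  rw [IntegrableOn, IntegrableOn, mulHaarR, restrict_withDensity measurableSet_Ioi,
    integrable_withDensity_iff_integrable_smul' (by fun_prop)
      (ae_of_all _ fun _ => ENNReal.ofReal_lt_top)]
  refine integrableOn_congr_fun (fun x (hx : 0 < x) => ?_) measurableSet_Ioi
  rw [ENNReal.toReal_ofReal (by positivity), abs_of_pos hx, one_div]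

lemma setIntegral_Ioi_mulHaarR (g : ℝ → ℂ) :
    ∫ x in Ioi 0, g x ∂mulHaarR = ∫ x in Ioi 0, x⁻¹ • g x := by
  rw [mulHaarR, setIntegral_withDensity_eq_setIntegral_toReal_smul (by fun_prop)
    (ae_of_all _ fun _ => ENNReal.ofReal_lt_top) _ measurableSet_Ioi]
  refine setIntegral_congr_fun measurableSet_Ioi fun x (hx : 0 < x) => ?_
  rw [ENNReal.toReal_ofReal (by positivity), abs_of_pos hx, one_div]

lemma inv_smul_cpowR_mul {x : ℝ} (hx : 0 < x) (w z : ℂ) :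
    x⁻¹ • (cpowR x w * z) = (x : ℂ) ^ (w - 1) • z := by
  rw [cpowR_of_pos hx, cpow_sub _ _ (ofReal_ne_zero.mpr hx.ne'), cpow_one, real_smul,
    smul_eq_mul, ofReal_inv]
  ring

lemma mellinConvergent_iff_integrableOn_mulHaarR (f : ℝ → ℂ) (w : ℂ) :
    MellinConvergent f w ↔ IntegrableOn (fun x => cpowR x w * f x) (Ioi 0) mulHaarR := by
  rw [integrableOn_Ioi_mulHaarR_iff, MellinConvergent]
  exact integrableOn_congr_fun (fun x hx => (inv_smul_cpowR_mul hx w (f x)).symm)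
    measurableSet_Ioi

lemma mellin_eq_setIntegral_mulHaarR (f : ℝ → ℂ) (w : ℂ) :
    mellin f w = ∫ x in Ioi 0, cpowR x w * f x ∂mulHaarR := by
  rw [setIntegral_Ioi_mulHaarR, mellin]
  exact setIntegral_congr_fun measurableSet_Ioi fun x hx => (inv_smul_cpowR_mul hx w (f x)).symm

lemma cpowR_neg (x : ℝ) (w : ℂ) : cpowR (-x) w = cpowR x w := by
  rw [cpowR, cpowR, abs_neg]

section EvenMellin

variable {f : ℝ → ℂ} {w : ℂ}

lemma integrable_cpowR_mul_of_even (hf : ∀ x, f (-x) = f x) (hconv : MellinConvergent f w) :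
    Integrable (fun x => cpowR x w * f x) mulHaarR :=
  integrable_of_even_of_integrableOn_Ioi mulHaarR_singleton_zero
    (fun x => by rw [cpowR_neg, hf]) ((mellinConvergent_iff_integrableOn_mulHaarR f w).1 hconv)

lemma integral_cpowR_mul_of_even (hf : ∀ x, f (-x) = f x) (hconv : MellinConvergent f w) :
    ∫ x, cpowR x w * f x ∂mulHaarR = 2 * mellin f w := by
  rw [integral_eq_two_smul_setIntegral_Ioi_of_even mulHaarR_singleton_zero
    (fun x => by rw [cpowR_neg, hf]) ((mellinConvergent_iff_integrableOn_mulHaarR f w).1 hconv),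
    mellin_eq_setIntegral_mulHaarR, real_smul, ofReal_ofNat]

end EvenMellin

lemma mellinConvergent_exp_neg {w : ℂ} (hw : 0 < w.re) :
    MellinConvergent (fun t : ℝ => (Real.exp (-t) : ℂ)) w :=
  (GammaIntegral_convergent hw).congr_fun (fun _ _ => by rw [smul_eq_mul, mul_comm])
    measurableSet_Ioi

lemma mellin_exp_neg {w : ℂ} (hw : 0 < w.re) :
    mellin (fun t : ℝ => (Real.exp (-t) : ℂ)) w = Gamma w := by
  rw [Gamma_eq_integral hw, GammaIntegral, mellin]
  exact setIntegral_congr_fun measurableSet_Ioi fun _ _ => by rw [smul_eq_mul, mul_comm]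

lemma mellinConvergent_exp_neg_mul_sq {b : ℝ} (hb : 0 < b) {w : ℂ} (hw : 0 < w.re) :
    MellinConvergent (fun x : ℝ => (Real.exp (-(b * x ^ 2)) : ℂ)) w := by
  simp_rw [← Real.rpow_two]
  refine (MellinConvergent.comp_rpow (f := fun u => (Real.exp (-(b * u)) : ℂ)) two_ne_zero).2 ?_
  refine (MellinConvergent.comp_mul_left (f := fun t => (Real.exp (-t) : ℂ)) hb).2 ?_
  exact mellinConvergent_exp_neg (by simpa using hw)

lemma mellin_exp_neg_mul_sq {b : ℝ} (hb : 0 < b) {w : ℂ} (hw : 0 < w.re) :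
    mellin (fun x : ℝ => (Real.exp (-(b * x ^ 2)) : ℂ)) w =
      2⁻¹ * (b : ℂ) ^ (-(w / 2)) * Gamma (w / 2) := by
  simp_rw [← Real.rpow_two]
  rw [mellin_comp_rpow (fun u => (Real.exp (-(b * u)) : ℂ)),
    mellin_comp_mul_left (fun t : ℝ => (Real.exp (-t) : ℂ)) _ hb,
    mellin_exp_neg (by simpa using hw)]
  simp [mul_assoc]

noncomputable def gaussianCpowR (b : ℝ) (w : ℂ) (x : ℝ) : ℂ :=
  cpowR x w * (Real.exp (-(b * x ^ 2)) : ℂ)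

lemma integrable_gaussianCpowR {b : ℝ} (hb : 0 < b) {w : ℂ} (hw : 0 < w.re) :
    Integrable (gaussianCpowR b w) mulHaarR :=
  integrable_cpowR_mul_of_even (fun x => by rw [neg_sq]) (mellinConvergent_exp_neg_mul_sq hb hw)

lemma integral_gaussianCpowR {b : ℝ} (hb : 0 < b) {w : ℂ} (hw : 0 < w.re) :
    ∫ x, gaussianCpowR b w x ∂mulHaarR = (b : ℂ) ^ (-(w / 2)) * Gamma (w / 2) := by
  unfold gaussianCpowR
  rw [integral_cpowR_mul_of_even (fun x => by rw [neg_sq])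
    (mellinConvergent_exp_neg_mul_sq hb hw), mellin_exp_neg_mul_sq hb hw]
  ring

lemma measurePreserving_prodMk_mul_right_mulHaarR {α : Type*} [MeasurableSpace α] {ν : Measure α}
    [SFinite ν] {f : α → ℝ} (hf : Measurable f) (hf0 : ∀ᵐ a ∂ν, f a ≠ 0) :
    MeasurePreserving (fun q : α × ℝ => (q.1, q.2 * f q.1)) (ν.prod mulHaarR) (ν.prod mulHaarR) :=
  (MeasurePreserving.id ν).skew_product (measurable_snd.mul (hf.comp measurable_fst))
    (hf0.mono fun _ ha => map_mul_right_mulHaarR ha)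

lemma ae_fst_ne_zero_mulHaarR_prod {β : Type*} [MeasurableSpace β] {ν : Measure β} [SFinite ν] :
    ∀ᵐ q ∂(mulHaarR.prod ν), q.1 ≠ 0 :=
  Measure.quasiMeasurePreserving_fst.ae ae_ne_zero_mulHaarR

lemma ae_snd_ne_zero_prod_mulHaarR {α : Type*} [MeasurableSpace α] {ν : Measure α} [SFinite ν] :
    ∀ᵐ q ∂(ν.prod mulHaarR), q.2 ≠ 0 :=
  Measure.quasiMeasurePreserving_snd.ae ae_ne_zero_mulHaarR

def flickerSubst (p : ℝ × ℝ × ℝ) : ℝ × ℝ × ℝ :=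
  (p.1 * (p.2.2 * p.2.1), p.2.1, p.2.2 * p.2.1)

lemma measurePreserving_flickerSubst :
    MeasurePreserving flickerSubst
      (mulHaarR.prod (mulHaarR.prod mulHaarR)) (mulHaarR.prod (mulHaarR.prod mulHaarR)) := by
  have shear_c := (MeasurePreserving.id mulHaarR).prod
    (measurePreserving_prodMk_mul_right_mulHaarR measurable_id ae_ne_zero_mulHaarR)
  have shear_a := (Measure.measurePreserving_swap.comp
    (measurePreserving_prodMk_mul_right_mulHaarR (ν := mulHaarR.prod mulHaarR) measurable_snd
      ae_snd_ne_zero_prod_mulHaarR)).comp Measure.measurePreserving_swap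
  exact shear_a.comp shear_c

lemma cpowR_mul {x y : ℝ} (hx : x ≠ 0) (hy : y ≠ 0) (w : ℂ) :
    cpowR (x * y) w = cpowR x w * cpowR y w := by
  rw [cpowR, cpowR, cpowR, abs_mul, Real.log_mul (abs_ne_zero.mpr hx) (abs_ne_zero.mpr hy),
    ofReal_add, mul_add, Complex.exp_add]

lemma flickerIntegrand2_flickerSubst (s t₁ t₂ : ℂ) {x y z : ℝ} (hx : x ≠ 0) (hy : y ≠ 0)
    (hz : z ≠ 0) :
    flickerIntegrand2 s t₁ t₂ (flickerSubst (x, y, z)) =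
      gaussianCpowR (2 * Real.pi) (s + 2 * t₁) x *
        (gaussianCpowR Real.pi (2 * (s + t₁ + t₂)) y *
          gaussianCpowR (2 * Real.pi) (s + 2 * t₂) z) := by
  have hzy : z * y ≠ 0 := mul_ne_zero hz hy
  have hc : (z * y) ^ 2 / y ^ 2 = z ^ 2 := by field_simp
  have ha : (x * (z * y)) ^ 2 / (z * y) ^ 2 = x ^ 2 := by field_simp
  simp only [flickerIntegrand2, flickerSubst, gaussianCpowR, hc, ha]
  rw [cpowR_mul hx hzy, cpowR_mul hz hy, cpowR_mul hz hy]
  simp only [cpowR, ofReal_exp, ← Complex.exp_add]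
  congr 1
  push_cast
  ring

lemma flickerIntegrand2_comp_flickerSubst_ae_eq (s t₁ t₂ : ℂ) :
    (fun p => flickerIntegrand2 s t₁ t₂ (flickerSubst p))
      =ᵐ[mulHaarR.prod (mulHaarR.prod mulHaarR)]
      fun p => gaussianCpowR (2 * Real.pi) (s + 2 * t₁) p.1 *
        (gaussianCpowR Real.pi (2 * (s + t₁ + t₂)) p.2.1 *
          gaussianCpowR (2 * Real.pi) (s + 2 * t₂) p.2.2) := by
  filter_upwards [ae_fst_ne_zero_mulHaarR_prod,
    Measure.quasiMeasurePreserving_snd.ae ae_fst_ne_zero_mulHaarR_prod,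
    Measure.quasiMeasurePreserving_snd.ae ae_snd_ne_zero_prod_mulHaarR] with p hx hy hz
  exact flickerIntegrand2_flickerSubst s t₁ t₂ hx hy hz

lemma aestronglyMeasurable_flickerIntegrand2 (s t₁ t₂ : ℂ) {μ : Measure (ℝ × ℝ × ℝ)} :
    AEStronglyMeasurable (flickerIntegrand2 s t₁ t₂) μ := by
  unfold flickerIntegrand2 cpowR
  fun_prop

lemma integral_flickerIntegrand2 (s t₁ t₂ : ℂ) :
    ∫ p, flickerIntegrand2 s t₁ t₂ p ∂(mulHaarR.prod (mulHaarR.prod mulHaarR)) =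
      (∫ x, gaussianCpowR (2 * Real.pi) (s + 2 * t₁) x ∂mulHaarR) *
        ((∫ y, gaussianCpowR Real.pi (2 * (s + t₁ + t₂)) y ∂mulHaarR) *
          ∫ z, gaussianCpowR (2 * Real.pi) (s + 2 * t₂) z ∂mulHaarR) := by
  rw [← measurePreserving_flickerSubst.map_eq, integral_map
    measurePreserving_flickerSubst.measurable.aemeasurable
    (aestronglyMeasurable_flickerIntegrand2 s t₁ t₂),
    integral_congr_ae (flickerIntegrand2_comp_flickerSubst_ae_eq s t₁ t₂)]
  exact (integral_prod_mul _ _).trans (congrArg _ (integral_prod_mul _ _))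

lemma integrable_flickerIntegrand2 {s t₁ t₂ : ℂ} (h₁ : 0 < (s + 2 * t₁).re)
    (h₂ : 0 < (s + 2 * t₂).re) (h₃ : 0 < (s + t₁ + t₂).re) :
    Integrable (flickerIntegrand2 s t₁ t₂) (mulHaarR.prod (mulHaarR.prod mulHaarR)) := by
  have h2π : 0 < 2 * Real.pi := by positivity
  have h₃' : 0 < (2 * (s + t₁ + t₂)).re := by simpa using h₃
  have hprod := (integrable_gaussianCpowR h2π h₁).mul_prod
    ((integrable_gaussianCpowR Real.pi_pos h₃').mul_prod (integrable_gaussianCpowR h2π h₂))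
  exact (measurePreserving_flickerSubst.integrable_comp
    (aestronglyMeasurable_flickerIntegrand2 s t₁ t₂)).1
      (hprod.congr (flickerIntegrand2_comp_flickerSubst_ae_eq s t₁ t₂).symm)

lemma zetaR_eq_cpow_mul_Gamma (w : ℂ) :
    zetaR w = (Real.pi : ℂ) ^ (-(w / 2)) * Gamma (w / 2) := by
  rw [zetaR, neg_div]

lemma two_mul_pi_cpow (w : ℂ) : (2 * (Real.pi : ℂ)) ^ w = 2 ^ w * (Real.pi : ℂ) ^ w := by
  exact_mod_cast mul_cpow_ofReal_nonneg zero_le_two Real.pi_pos.le w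

lemma two_pi_cpow_mul_Gamma (w : ℂ) :
    ((2 * Real.pi : ℝ) : ℂ) ^ (-(w / 2)) * Gamma (w / 2) = 2 ^ (-(w / 2)) * zetaR w := by
  rw [ofReal_mul, ofReal_ofNat, two_mul_pi_cpow, zetaR_eq_cpow_mul_Gamma, mul_assoc]

lemma zetaC_eq_two_mul_cpow_mul_zetaR (z : ℂ) : zetaC z = 2 * 2 ^ (-z) * zetaR (2 * z) := by
  rw [zetaC, zetaR_eq_cpow_mul_Gamma, mul_div_cancel_left₀ _ two_ne_zero, two_mul_pi_cpow]
  ring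

/-- For `Re(s + 2t₁) > 0`, `Re(s + 2t₂) > 0`, `Re(s + t₁ + t₂) > 0`, the triple integral
`2 ∫∫∫ |a₁|^{s+2t₁} |a₂|^{s+2t₁} |c|^{2(t₂-t₁)} e^{-π a₂² - 2π c²/a₂² - 2π a₁²/c²}
  d×c d×a₁ d×a₂` converges absolutely and equals `ζ_ℝ(s+2t₁) ζ_ℝ(s+2t₂) ζ_ℂ(s+t₁+t₂)`. -/
theorem stmt_5 (t₁ t₂ s : ℂ) (h₁ : 0 < (s + 2 * t₁).re) (h₂ : 0 < (s + 2 * t₂).re)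
    (h₃ : 0 < (s + t₁ + t₂).re) :
    Integrable (flickerIntegrand2 s t₁ t₂) (mulHaarR.prod (mulHaarR.prod mulHaarR)) ∧
      2 * ∫ p : ℝ × ℝ × ℝ, flickerIntegrand2 s t₁ t₂ p
            ∂(mulHaarR.prod (mulHaarR.prod mulHaarR)) =
        zetaR (s + 2 * t₁) * zetaR (s + 2 * t₂) * zetaC (s + t₁ + t₂) := by
  refine ⟨integrable_flickerIntegrand2 h₁ h₂ h₃, ?_⟩
  have h2π : 0 < 2 * Real.pi := by positivity
  have h₃' : 0 < (2 * (s + t₁ + t₂)).re := by simpa using h₃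
  have hpow : (2 : ℂ) ^ (-((s + 2 * t₁) / 2)) * 2 ^ (-((s + 2 * t₂) / 2)) =
      2 ^ (-(s + t₁ + t₂)) := by
    rw [← cpow_add _ _ two_ne_zero]
    ring_nf
  rw [integral_flickerIntegrand2, integral_gaussianCpowR h2π h₁,
    integral_gaussianCpowR Real.pi_pos h₃', integral_gaussianCpowR h2π h₂,
    two_pi_cpow_mul_Gamma, two_pi_cpow_mul_Gamma, ← zetaR_eq_cpow_mul_Gamma,
    zetaC_eq_two_mul_cpow_mul_zetaR, ← hpow]
  ring
end

section
/- Let t, u, s₁, s₂ ∈ ℂ with Re(s₁ + u) > 0 and Re(s₂ + t + u) > 0. Then the double integral ∫_{ℂˣ}∫_{ℂˣ} |g₁|_ℂ^{s₂−s₁+t} · |g₂|_ℂ^{s₁+u} · exp(−2π(|g₁|² + |g₂|²/|g₁|²)) d×g₂ d×g₁ converges absolutely and equals ζ_ℂ(s₂ + t + u) · ζ_ℂ(s₁ + u). (This is the case n = 1, F = ℂ of the paper's theorem on the modified GL_n × GL_n Rankin–Selberg integral of Sakellaridis for π = |·|_ℂ^t and σ = |·|_ℂ^u with Gaussian test data,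 evaluating to L(s₂, π × σ)·L(s₁, σ).) -/
open MeasureTheory

/-- The integrand of the `n = 1`, `F = ℂ` modified Rankin–Selberg integral of
Sakellaridis, in the variables `p = (g₁, g₂)`:
`|g₁|_ℂ^{s₂-s₁+t} |g₂|_ℂ^{s₁+u} exp(-2π(|g₁|² + |g₂|²/|g₁|²))`. -/
noncomputable def sakIntegrandC1 (s₁ s₂ t u : ℂ) (p : ℂ × ℂ) : ℂ :=
  cpowC p.1 (s₂ - s₁ + t) * cpowC p.2 (s₁ + u) *
    (Real.exp (-(2 * Real.pi) * (‖p.1‖ ^ 2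
      + ‖p.2‖ ^ 2 / ‖p.1‖ ^ 2)) : ℂ)

/-! The shear `(g₁, g₂) ↦ (g₁, g₁⁻¹ g₂)` preserves `d×g₁ d×g₂`, since `d×` is invariant under
multiplication by `ℂˣ`, and it turns the integrand into `φ_{s₂+t+u}(g₁) φ_{s₁+u}(g₂)` with
`φ_w(z) = |z|_ℂ^w e^{-2π|z|²}`. Each factor is Tate's local zeta integral at the complex place:
in polar coordinates and with `x = |z|²` it becomes `2 ∫₀^∞ x^{w-1} e^{-2πx} dx = ζ_ℂ(w)`. -/

open Set
open scoped Real

lemma cpowC_add (z w w' : ℂ) : cpowC z (w + w') = cpowC z w * cpowC z w' := by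
  rw [cpowC, cpowC, cpowC, add_mul, Complex.exp_add]

lemma cpowC_inv (z w : ℂ) : cpowC z⁻¹ w = cpowC z (-w) := by
  rw [cpowC, cpowC, norm_inv, inv_pow, Real.log_inv, Complex.ofReal_neg, mul_neg, neg_mul]

lemma cpowC_mul {z z' : ℂ} (hz : z ≠ 0) (hz' : z' ≠ 0) (w : ℂ) :
    cpowC (z * z') w = cpowC z w * cpowC z' w := by
  rw [cpowC, cpowC, cpowC, norm_mul, mul_pow, Real.log_mul (by positivity) (by positivity),
    Complex.ofReal_add, mul_add, Complex.exp_add]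

lemma measurable_mulHaarC_density :
    Measurable fun z : ℂ => ENNReal.ofReal (2 / (π * ‖z‖ ^ 2)) := by
  fun_prop

instance : SFinite mulHaarC := by
  unfold mulHaarC; infer_instance

lemma ae_ne_zero_mulHaarC : ∀ᵐ z ∂mulHaarC, z ≠ 0 :=
  (withDensity_absolutelyContinuous _ _ : mulHaarC ≪ volume).ae_le
    (compl_mem_ae_iff.mpr (measure_singleton 0))

lemma map_volume_mul_left {c : ℂ} (hc : c ≠ 0) :
    Measure.map (c * ·) volume = ENNReal.ofReal (‖c‖ ^ 2)⁻¹ • (volume : Measure ℂ) := by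
  have hdet : LinearMap.det (LinearMap.mul ℝ ℂ c) = ‖c‖ ^ 2 := by
    rw [Complex.sq_norm, ← Algebra.norm_complex_apply]; rfl
  have h := Measure.map_linearMap_addHaar_eq_smul_addHaar (μ := volume)
    (f := LinearMap.mul ℝ ℂ c) (by rw [hdet]; positivity)
  rwa [hdet, abs_of_nonneg (by positivity)] at h

lemma mulHaarC_density_eq_mul {c : ℂ} (hc : c ≠ 0) (z : ℂ) :
    ENNReal.ofReal (2 / (π * ‖z‖ ^ 2)) =
      ENNReal.ofReal (‖c‖ ^ 2) * ENNReal.ofReal (2 / (π * ‖c * z‖ ^ 2)) := by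
  rw [← ENNReal.ofReal_mul (by positivity), norm_mul, mul_pow]
  rcases eq_or_ne z 0 with rfl | hz
  · simp
  congr 1
  field_simp

lemma map_mul_left_mulHaarC {c : ℂ} (hc : c ≠ 0) :
    Measure.map (c * ·) mulHaarC = mulHaarC := by
  have hm : Measurable (c * ·) := measurable_const_mul c
  ext s hs
  rw [Measure.map_apply hm hs, mulHaarC, withDensity_apply _ (hm hs), withDensity_apply _ hs]
  calc ∫⁻ z in (c * ·) ⁻¹' s, ENNReal.ofReal (2 / (π * ‖z‖ ^ 2))
      = ∫⁻ z in (c * ·) ⁻¹' s,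
          ENNReal.ofReal (‖c‖ ^ 2) * ENNReal.ofReal (2 / (π * ‖c * z‖ ^ 2)) :=
        lintegral_congr fun z => mulHaarC_density_eq_mul hc z
    _ = ∫⁻ z in s, ENNReal.ofReal (‖c‖ ^ 2) * ENNReal.ofReal (2 / (π * ‖z‖ ^ 2))
          ∂Measure.map (c * ·) volume :=
        (setLIntegral_map hs (measurable_mulHaarC_density.const_mul _) hm).symm
    _ = ∫⁻ z in s, ENNReal.ofReal (2 / (π * ‖z‖ ^ 2)) := by
        rw [map_volume_mul_left hc, Measure.restrict_smul, lintegral_smul_measure,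
          lintegral_const_mul _ measurable_mulHaarC_density, smul_eq_mul, ← mul_assoc,
          ← ENNReal.ofReal_mul (by positivity), inv_mul_cancel₀ (by positivity),
          ENNReal.ofReal_one, one_mul]

lemma measurePreserving_inv_mul_snd :
    MeasurePreserving (fun p : ℂ × ℂ => (p.1, p.1⁻¹ * p.2))
      (mulHaarC.prod mulHaarC) (mulHaarC.prod mulHaarC) :=
  (MeasurePreserving.id mulHaarC).skew_product (measurable_fst.inv.mul measurable_snd) <|
    ae_ne_zero_mulHaarC.mono fun _ hz => map_mul_left_mulHaarC (inv_ne_zero hz)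

section

variable {E : Type*} [NormedAddCommGroup E] [NormedSpace ℝ E]

lemma integrable_mulHaarC_iff {f : ℂ → E} :
    Integrable f mulHaarC ↔ Integrable (fun z => (2 / (π * ‖z‖ ^ 2)) • f z) := by
  rw [mulHaarC, integrable_withDensity_iff_integrable_smul' measurable_mulHaarC_density
    (ae_of_all _ fun _ => ENNReal.ofReal_lt_top)]
  simp (disch := positivity) only [ENNReal.toReal_ofReal]

lemma integral_mulHaarC (f : ℂ → E) :
    ∫ z, f z ∂mulHaarC = ∫ z, (2 / (π * ‖z‖ ^ 2)) • f z := by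
  rw [mulHaarC, integral_withDensity_eq_integral_toReal_smul measurable_mulHaarC_density
    (ae_of_all _ fun _ => ENNReal.ofReal_lt_top)]
  simp (disch := positivity) only [ENNReal.toReal_ofReal]

-- Polar coordinates on `ℂ` give the radial weight `r ^ (finrank ℝ ℂ - 1)`; the right-hand side is
-- prepared for the substitution `x = r ^ 2`.
lemma rpow_two_smul_inv_smul_eqOn (f : ℝ → E) :
    EqOn (fun r : ℝ => r ^ (Module.finrank ℝ ℂ - 1) • ((2 / (π * r ^ 2)) • f (r ^ 2)))
      (fun r => π⁻¹ • ((|(2:ℝ)| * r ^ ((2:ℝ) - 1)) • ((r ^ (2:ℝ))⁻¹ • f (r ^ (2:ℝ)))))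
      (Ioi 0) := by
  intro r (hr : 0 < r)
  simp only [Complex.finrank_real_complex, Real.rpow_two, smul_smul, abs_two]
  congr 1
  field_simp
  norm_num

lemma integrable_mulHaarC_comp_norm_sq_iff {f : ℝ → E} :
    Integrable (fun z : ℂ => f (‖z‖ ^ 2)) mulHaarC ↔
      IntegrableOn (fun x => x⁻¹ • f x) (Ioi 0) := by
  rw [integrable_mulHaarC_iff,
    integrable_fun_norm_addHaar volume (f := fun r => (2 / (π * r ^ 2)) • f (r ^ 2)),
    integrableOn_congr_fun (rpow_two_smul_inv_smul_eqOn f) measurableSet_Ioi, IntegrableOn,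
    integrable_fun_smul_iff (inv_ne_zero Real.pi_ne_zero), ← IntegrableOn,
    integrableOn_Ioi_comp_rpow_iff (fun x => x⁻¹ • f x) two_ne_zero]

lemma integral_mulHaarC_comp_norm_sq (f : ℝ → E) :
    ∫ z : ℂ, f (‖z‖ ^ 2) ∂mulHaarC = (2 : ℝ) • ∫ x in Ioi 0, x⁻¹ • f x := by
  rw [integral_mulHaarC,
    integral_fun_norm_addHaar volume (fun r => (2 / (π * r ^ 2)) • f (r ^ 2)),
    setIntegral_congr_fun measurableSet_Ioi (rpow_two_smul_inv_smul_eqOn f), integral_smul,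
    integral_comp_rpow_Ioi (fun x => x⁻¹ • f x) two_ne_zero, smul_smul]
  simp [measureReal_def, Real.pi_ne_zero, ofNat_smul_eq_nsmul ℝ 2]

end

lemma integrableOn_cpow_mul_exp_neg_mul_Ioi {w : ℂ} (hw : 0 < w.re) {a : ℝ} (ha : 0 < a) :
    IntegrableOn (fun x : ℝ => (x : ℂ) ^ (w - 1) * Complex.exp (-(a * x))) (Ioi 0) := by
  have hscaled : IntegrableOn
      (fun x : ℝ => (Real.exp (-(a * x)) : ℂ) * ((a * x : ℝ) : ℂ) ^ (w - 1)) (Ioi 0) := by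
    have := (integrableOn_Ioi_comp_mul_left_iff
      (fun x : ℝ => (Real.exp (-x) : ℂ) * (x : ℂ) ^ (w - 1)) 0 ha).mpr
    rw [mul_zero] at this
    exact this (Complex.GammaIntegral_convergent hw)
  refine IntegrableOn.congr_fun (hscaled.const_mul ((a : ℂ) ^ (w - 1))⁻¹)
    (fun x (hx : 0 < x) => ?_) measurableSet_Ioi
  have ha' : (a : ℂ) ^ (w - 1) ≠ 0 := by simp [Complex.cpow_eq_zero_iff, ha.ne']
  rw [Complex.ofReal_mul, Complex.mul_cpow_ofReal_nonneg ha.le hx.le, Complex.ofReal_exp]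
  push_cast
  field_simp

lemma inv_smul_cexp_mul_log_mul_exp_eqOn (w : ℂ) (a : ℝ) :
    EqOn (fun x : ℝ => x⁻¹ • (Complex.exp (w * Real.log x) * (Real.exp (-a * x) : ℂ)))
      (fun x : ℝ => (x : ℂ) ^ (w - 1) * Complex.exp (-(a * x))) (Ioi 0) := by
  intro x (hx : 0 < x)
  have hx' : (x : ℂ) ≠ 0 := Complex.ofReal_ne_zero.mpr hx.ne'
  dsimp only
  rw [Complex.cpow_sub _ _ hx', Complex.cpow_one, Complex.cpow_def_of_ne_zero hx',
    ← Complex.ofReal_log hx.le, Complex.real_smul, Complex.ofReal_exp]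
  push_cast
  field_simp

lemma integrable_cpowC_mul_exp_neg_mul_sq {w : ℂ} (hw : 0 < w.re) {a : ℝ} (ha : 0 < a) :
    Integrable (fun z => cpowC z w * (Real.exp (-a * ‖z‖ ^ 2) : ℂ)) mulHaarC :=
  (integrable_mulHaarC_comp_norm_sq_iff
    (f := fun x => Complex.exp (w * Real.log x) * (Real.exp (-a * x) : ℂ))).mpr <|
      (integrableOn_cpow_mul_exp_neg_mul_Ioi hw ha).congr_fun
        (inv_smul_cexp_mul_log_mul_exp_eqOn w a).symm measurableSet_Ioi

lemma integral_cpowC_mul_exp_neg_mul_sq {w : ℂ} (hw : 0 < w.re) {a : ℝ} (ha : 0 < a) :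
    ∫ z, cpowC z w * (Real.exp (-a * ‖z‖ ^ 2) : ℂ) ∂mulHaarC =
      2 * (a : ℂ) ^ (-w) * Complex.Gamma w := by
  refine (integral_mulHaarC_comp_norm_sq
    (fun x => Complex.exp (w * Real.log x) * (Real.exp (-a * x) : ℂ))).trans ?_
  rw [setIntegral_congr_fun measurableSet_Ioi (inv_smul_cexp_mul_log_mul_exp_eqOn w a),
    Complex.integral_cpow_mul_exp_neg_mul_Ioi hw ha, one_div,
    Complex.inv_cpow _ _ (by simp [Complex.arg_ofReal_of_nonneg ha.le, Real.pi_ne_zero.symm]),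
    ← Complex.cpow_neg, Complex.real_smul]
  push_cast
  ring

lemma integral_cpowC_mul_exp_neg_two_pi_mul_sq {w : ℂ} (hw : 0 < w.re) :
    ∫ z, cpowC z w * (Real.exp (-(2 * π) * ‖z‖ ^ 2) : ℂ) ∂mulHaarC = zetaC w := by
  rw [integral_cpowC_mul_exp_neg_mul_sq hw (by positivity), zetaC]
  push_cast
  rfl

lemma sakIntegrandC1_eq_of_ne_zero {g₁ g₂ : ℂ} (hg₁ : g₁ ≠ 0) (hg₂ : g₂ ≠ 0) (s₁ s₂ t u : ℂ) :
    sakIntegrandC1 s₁ s₂ t u (g₁, g₂) =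
      cpowC g₁ (s₂ + t + u) * (Real.exp (-(2 * π) * ‖g₁‖ ^ 2) : ℂ) *
        (cpowC (g₁⁻¹ * g₂) (s₁ + u) * (Real.exp (-(2 * π) * ‖g₁⁻¹ * g₂‖ ^ 2) : ℂ)) := by
  have hexp : s₂ - s₁ + t = s₂ + t + u + -(s₁ + u) := by ring
  rw [sakIntegrandC1, hexp, cpowC_add, cpowC_mul (inv_ne_zero hg₁) hg₂, cpowC_inv, norm_mul,
    norm_inv, mul_pow, inv_pow, inv_mul_eq_div, mul_add, Real.exp_add, Complex.ofReal_mul]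
  ring

/-- For `Re(s₁ + u) > 0` and `Re(s₂ + t + u) > 0`, the double integral
`∫∫ |g₁|_ℂ^{s₂-s₁+t} |g₂|_ℂ^{s₁+u} e^{-2π(|g₁|² + |g₂|²/|g₁|²)} d×g₂ d×g₁` converges
absolutely and equals `ζ_ℂ(s₂+t+u) ζ_ℂ(s₁+u)`. -/
theorem stmt_11 (t u s₁ s₂ : ℂ) (h₁ : 0 < (s₁ + u).re) (h₂ : 0 < (s₂ + t + u).re) :
    Integrable (sakIntegrandC1 s₁ s₂ t u) (mulHaarC.prod mulHaarC) ∧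
      ∫ p : ℂ × ℂ, sakIntegrandC1 s₁ s₂ t u p ∂(mulHaarC.prod mulHaarC) =
        zetaC (s₂ + t + u) * zetaC (s₁ + u) := by
  set φ : ℂ → ℂ → ℂ := fun w z => cpowC z w * (Real.exp (-(2 * π) * ‖z‖ ^ 2) : ℂ)
  set G : ℂ × ℂ → ℂ := fun p => φ (s₂ + t + u) p.1 * φ (s₁ + u) p.2
  have hG : Integrable G (mulHaarC.prod mulHaarC) :=
    (integrable_cpowC_mul_exp_neg_mul_sq h₂ (by positivity)).mul_prod
      (integrable_cpowC_mul_exp_neg_mul_sq h₁ (by positivity))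
  have hσ := measurePreserving_inv_mul_snd
  have hsheared : sakIntegrandC1 s₁ s₂ t u =ᵐ[mulHaarC.prod mulHaarC]
      fun p => G (p.1, p.1⁻¹ * p.2) := by
    filter_upwards [Measure.quasiMeasurePreserving_fst.ae ae_ne_zero_mulHaarC,
      Measure.quasiMeasurePreserving_snd.ae ae_ne_zero_mulHaarC] with p hp₁ hp₂
    exact sakIntegrandC1_eq_of_ne_zero hp₁ hp₂ s₁ s₂ t u
  refine ⟨(hσ.integrable_comp_of_integrable hG).congr hsheared.symm, ?_⟩
  rw [integral_congr_ae hsheared, ← integral_map hσ.measurable.aemeasurable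
    (by rw [hσ.map_eq]; exact hG.aestronglyMeasurable), hσ.map_eq, integral_prod_mul,
    integral_cpowC_mul_exp_neg_two_pi_mul_sq h₂, integral_cpowC_mul_exp_neg_two_pi_mul_sq h₁]
end
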